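/- arXiv:1408.6712 — 4 statements merged into one kernel-verified Lean document; each statement's English description precedes it below -/
import Mathlib

section
/- Let X be a metric space, ψ : X → ℝ upper semicontinuous and θ : X → ℝ lower semicontinuous with ψ(x) < θ(x) for all x. Then there exists a continuous function φ : X → ℝ with ψ(x) < φ(x) < θ(x) for all x. -/
/-! Near each point `x` a constant `c` with `ψ x < c < θ x` stays strictly between `ψ` and `θ`,
by the two semicontinuities. The intervals `(ψ y, θ y)` are convex, so on a paracompact normal
space these local constants glue, through a partition of unity, to a continuous function. -/

open Filter Set

theorem exists_continuous_forall_mem_Ioo_of_semicontinuous {X : Type*} [TopologicalSpace X]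
    [NormalSpace X] [ParacompactSpace X] {ψ θ : X → ℝ} (hψ : UpperSemicontinuous ψ)
    (hθ : LowerSemicontinuous θ) (hlt : ∀ x, ψ x < θ x) :
    ∃ φ : C(X, ℝ), ∀ x, φ x ∈ Ioo (ψ x) (θ x) :=
  exists_continuous_forall_mem_convex_of_local_const (fun _ => convex_Ioo _ _) fun x =>
    let ⟨c, hψc, hcθ⟩ := exists_between (hlt x)
    ⟨c, (hψ x c hψc).and (hθ x c hcθ)⟩

/-- Baire insertion theorem: a continuous function can be inserted strictly between an
upper semicontinuous function and a larger lower semicontinuous function. -/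
theorem baire_insertion {X : Type*} [MetricSpace X]
    (ψ θ : X → ℝ) (hψ : UpperSemicontinuous ψ) (hθ : LowerSemicontinuous θ)
    (hlt : ∀ x, ψ x < θ x) :
    ∃ φ : X → ℝ, Continuous φ ∧ ∀ x, ψ x < φ x ∧ φ x < θ x :=
  let ⟨φ, hφ⟩ := exists_continuous_forall_mem_Ioo_of_semicontinuous hψ hθ hlt
  ⟨φ, φ.continuous, hφ⟩
end

section
/- Let u_n : M → ℝ be Lipschitz with constants κ_n on a compact Riemannian manifold M, with Σ_n ‖u_n‖_∞ < ∞ and Σ_n κ_n < ∞. Then u = Σ_n u_n is Lipschitz with constant Σ_n κ_n, and for every (x,v) ∈ TM one has ∂⁺u(x,v) ≤ Σ_n ∂⁺u_n(x,v), where ∂⁺ denotes the Clarke upper gauge. -/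
open Filter Topology

def reachableGrad {n : ℕ} (u : EuclideanSpace ℝ (Fin n) → ℝ)
    (x : EuclideanSpace ℝ (Fin n)) : Set (EuclideanSpace ℝ (Fin n) →L[ℝ] ℝ) :=
  {p | ∃ xs : ℕ → EuclideanSpace ℝ (Fin n),
        (∀ m, DifferentiableAt ℝ u (xs m)) ∧
        Tendsto xs atTop (𝓝 x) ∧
        Tendsto (fun m => fderiv ℝ u (xs m)) atTop (𝓝 p)}

def clarkeGrad {n : ℕ} (u : EuclideanSpace ℝ (Fin n) → ℝ)
    (x : EuclideanSpace ℝ (Fin n)) : Set (EuclideanSpace ℝ (Fin n) →L[ℝ] ℝ) :=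
  closure (convexHull ℝ (reachableGrad u x))

noncomputable def clarkeUpper {n : ℕ} (u : EuclideanSpace ℝ (Fin n) → ℝ)
    (x v : EuclideanSpace ℝ (Fin n)) : ℝ :=
  sSup ((fun p : EuclideanSpace ℝ (Fin n) →L[ℝ] ℝ => p v) '' clarkeGrad u x)

/-! The Clarke upper gauge `∂⁺u(x, v)` is the limit superior of the difference quotients
`(u (y + t • v) - u y) / t` as `y → x`, `t ↓ 0`. One inequality is a directional mean value
inequality for Lipschitz functions, obtained from Rademacher's theorem, Fubini along lines and the
fundamental theorem of calculus; the other is the definition of the derivative at the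
differentiability points near `x`. The difference quotients of `∑ u_m` are the sums of those of the
`u_m`, which are dominated by the summable `κ_m ‖v‖`, so a limit superior of the sum is at most the
sum of the limits superior (reverse Fatou). -/

open MeasureTheory Set

theorem LipschitzWith.tsum {α ι F : Type*} [PseudoMetricSpace α] [NormedAddCommGroup F]
    {f : ι → α → F} {K : ι → NNReal} (hf : ∀ i, LipschitzWith (K i) (f i)) (hK : Summable K)
    (hs : ∀ x, Summable fun i => f i x) :
    LipschitzWith (∑' i, K i) fun x => ∑' i, f i x := by
  refine LipschitzWith.of_dist_le_mul fun x y => ?_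
  rw [dist_eq_norm, ← (hs x).tsum_sub (hs y), NNReal.coe_tsum, ← tsum_mul_right]
  exact tsum_of_norm_bounded ((NNReal.summable_coe.2 hK).mul_right _).hasSum fun i => by
    simpa only [dist_eq_norm] using (hf i).dist_le_mul x y

theorem eventually_sum_le_sum_add {α ι : Type*} {l : Filter α} {f : ι → α → ℝ} {a : ι → ℝ}
    (s : Finset ι) (hfa : ∀ i ∈ s, ∀ η > 0, ∀ᶠ z in l, f i z ≤ a i + η) {ε : ℝ} (hε : 0 < ε) :
    ∀ᶠ z in l, ∑ i ∈ s, f i z ≤ ∑ i ∈ s, a i + ε := by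
  classical
  induction s using Finset.induction_on generalizing ε with
  | empty => exact .of_forall fun _ => by simpa using hε.le
  | insert i s hi ih =>
    filter_upwards [hfa i (s.mem_insert_self i) (ε / 2) (half_pos hε),
      ih (fun j hj => hfa j (Finset.mem_insert_of_mem hj)) (half_pos hε)] with z hiz hsz
    rw [Finset.sum_insert hi, Finset.sum_insert hi]
    linarith

theorem eventually_tsum_le_tsum_add {α : Type*} {l : Filter α} {f : ℕ → α → ℝ} {a b : ℕ → ℝ}
    (hb : Summable b) (hfb : ∀ m z, |f m z| ≤ b m) (hab : ∀ m, |a m| ≤ b m)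
    (hfa : ∀ m, ∀ η > 0, ∀ᶠ z in l, f m z ≤ a m + η) {ε : ℝ} (hε : 0 < ε) :
    ∀ᶠ z in l, ∑' m, f m z ≤ ∑' m, a m + ε := by
  have hε3 : 0 < ε / 3 := by positivity
  obtain ⟨N, hN⟩ := ((tendsto_sum_nat_add b).eventually (gt_mem_nhds hε3)).exists
  have hb' : Summable fun m => b (m + N) := (summable_nat_add_iff N).2 hb
  have ha : Summable a := .of_norm_bounded hb hab
  have ha_tail : -∑' m, b (m + N) ≤ ∑' m, a (m + N) := by
    rw [← tsum_neg]
    exact Summable.tsum_le_tsum (fun m => (abs_le.1 (hab _)).1) hb'.neg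
      ((summable_nat_add_iff N).2 ha)
  filter_upwards [eventually_sum_le_sum_add (Finset.range N) (fun m _ => hfa m) hε3] with z hz
  have hf : Summable fun m => f m z := .of_norm_bounded hb fun m => hfb m z
  have hf_tail : ∑' m, f (m + N) z ≤ ∑' m, b (m + N) :=
    Summable.tsum_le_tsum (fun m => (abs_le.1 (hfb _ z)).2) ((summable_nat_add_iff N).2 hf) hb'
  rw [← hf.sum_add_tsum_nat_add N, ← ha.sum_add_tsum_nat_add N]
  linarith

theorem LipschitzWith.sub_le_of_ae_deriv_le {g : ℝ → ℝ} {K : NNReal} (hg : LipschitzWith K g)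
    {a b C : ℝ} (hab : a ≤ b) (h : ∀ᵐ s, s ∈ Icc a b → deriv g s ≤ C) :
    g b - g a ≤ C * (b - a) := by
  have hac := hg.lipschitzOnWith (s := uIcc a b) |>.absolutelyContinuousOnInterval
  calc g b - g a = ∫ s in a..b, deriv g s := hac.integral_deriv_eq_sub.symm
    _ ≤ ∫ _ in a..b, C := intervalIntegral.integral_mono_ae_restrict hab
        hac.intervalIntegrable_deriv intervalIntegrable_const
        ((ae_restrict_iff' measurableSet_Icc).2 h)
    _ = C * (b - a) := by simp [mul_comm]

section LineSlope

variable {E : Type*} [NormedAddCommGroup E] [NormedSpace ℝ E]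

theorem ae_ae_differentiableAt_add_smul [FiniteDimensional ℝ E] [MeasurableSpace E]
    [BorelSpace E] (μ : Measure E) [μ.IsAddHaarMeasure] {F : Type*} [NormedAddCommGroup F]
    [NormedSpace ℝ F] [FiniteDimensional ℝ F] {u : E → F} {K : NNReal} (hu : LipschitzWith K u)
    (v : E) : ∀ᵐ y ∂μ, ∀ᵐ τ : ℝ, DifferentiableAt ℝ u (y + τ • v) :=
  (ae_ae_add_linearMap_mem_iff (ContinuousLinearMap.smulRight (1 : ℝ →L[ℝ] ℝ) v).toLinearMap
    volume μ (measurableSet_of_differentiableAt ℝ u)).2 hu.ae_differentiableAt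

theorem LipschitzWith.sub_le_mul_of_fderiv_le_of_ae {u : E → ℝ} {K : NNReal}
    (hu : LipschitzWith K u) {s : Set E} (hsc : Convex ℝ s) {v : E} {a : ℝ}
    (hs : ∀ z ∈ s, DifferentiableAt ℝ u z → fderiv ℝ u z v ≤ a) {y : E} {t : ℝ} (ht : 0 ≤ t)
    (hy : y ∈ s) (hyt : y + t • v ∈ s) (hae : ∀ᵐ τ : ℝ, DifferentiableAt ℝ u (y + τ • v)) :
    u (y + t • v) - u y ≤ a * t := by
  have hline : ∀ τ : ℝ, HasDerivAt (fun τ : ℝ => y + τ • v) v τ := fun τ => by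
    simpa using ((hasDerivAt_id τ).smul_const v).const_add y
  have hg : LipschitzWith (K * ‖v‖₊) fun τ : ℝ => u (y + τ • v) :=
    hu.comp (LipschitzWith.of_dist_le_mul fun τ σ => by
      simp [dist_eq_norm, ← sub_smul, norm_smul, mul_comm])
  have hmem : ∀ τ ∈ Icc 0 t, y + τ • v ∈ s := by
    rintro τ ⟨hτ0, hτt⟩
    rcases ht.eq_or_lt with rfl | htpos
    · simpa [le_antisymm hτt hτ0] using hy
    · have := hsc.add_smul_mem hy hyt ⟨div_nonneg hτ0 ht, div_le_one_of_le₀ hτt ht⟩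
      rwa [smul_smul, div_mul_cancel₀ _ htpos.ne'] at this
  simpa using hg.sub_le_of_ae_deriv_le ht <| hae.mono fun τ hτ hτt => by
    have hderiv : HasDerivAt (fun τ : ℝ => u (y + τ • v)) (fderiv ℝ u (y + τ • v) v) τ :=
      hτ.hasFDerivAt.comp_hasDerivAt τ (hline τ)
    rw [hderiv.deriv]
    exact hs _ (hmem τ hτt) hτ

/-- The inequality holds on almost every line in direction `v` (Rademacher and Fubini) and passes
to all of them by density and continuity. -/
theorem LipschitzWith.sub_le_mul_of_fderiv_le [FiniteDimensional ℝ E] {u : E → ℝ} {K : NNReal}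
    (hu : LipschitzWith K u) {s : Set E} (hso : IsOpen s) (hsc : Convex ℝ s) {v : E} {a : ℝ}
    (hs : ∀ z ∈ s, DifferentiableAt ℝ u z → fderiv ℝ u z v ≤ a) {y : E} {t : ℝ} (ht : 0 ≤ t)
    (hy : y ∈ s) (hyt : y + t • v ∈ s) :
    u (y + t • v) - u y ≤ a * t := by
  let : MeasurableSpace E := borel E
  have : BorelSpace E := ⟨rfl⟩
  have hdense : Dense {y : E | ∀ᵐ τ : ℝ, DifferentiableAt ℝ u (y + τ • v)} :=
    Measure.dense_of_ae (ae_ae_differentiableAt_add_smul Measure.addHaar hu v)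
  have hopen : IsOpen {y : E | y ∈ s ∧ y + t • v ∈ s} :=
    hso.inter (hso.preimage (continuous_id.add continuous_const))
  have hclosed : IsClosed {y : E | u (y + t • v) - u y ≤ a * t} :=
    isClosed_le ((hu.continuous.comp (continuous_id.add continuous_const)).sub hu.continuous)
      continuous_const
  refine closure_minimal ?_ hclosed (hdense.open_subset_closure_inter hopen ⟨hy, hyt⟩)
  rintro z ⟨⟨hz, hzt⟩, hzae⟩
  exact hu.sub_le_mul_of_fderiv_le_of_ae hsc hs ht hz hzt hzae

/-- A function of `(y, t)`, so that `y → x, t ↓ 0` is the filter `𝓝 x ×ˢ 𝓝[>] 0`. -/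
noncomputable def lineSlope (u : E → ℝ) (v : E) (p : E × ℝ) : ℝ :=
  (u (p.1 + p.2 • v) - u p.1) / p.2

theorem abs_lineSlope_le {u : E → ℝ} {K : NNReal} (hu : LipschitzWith K u) (v : E)
    (p : E × ℝ) : |lineSlope u v p| ≤ K * ‖v‖ := by
  rcases eq_or_ne p.2 0 with h | h
  · simp only [lineSlope, h, div_zero, abs_zero]
    positivity
  · rw [lineSlope, abs_div, div_le_iff₀ (abs_pos.2 h)]
    simpa [Real.dist_eq, norm_smul, mul_assoc, mul_comm |p.2|] using
      hu.dist_le_mul (p.1 + p.2 • v) p.1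

theorem lineSlope_tsum {u : ℕ → E → ℝ} (hu : ∀ y, Summable fun m => u m y) (v : E)
    (p : E × ℝ) : lineSlope (fun y => ∑' m, u m y) v p = ∑' m, lineSlope (u m) v p := by
  simp only [lineSlope, ← (hu _).tsum_sub (hu _), tsum_div_const]

theorem tendsto_lineSlope {u : E → ℝ} {y : E} (hu : DifferentiableAt ℝ u y) (v : E) :
    Tendsto (fun t => lineSlope u v (y, t)) (𝓝[>] 0) (𝓝 (fderiv ℝ u y v)) :=
  ((hu.hasFDerivAt.hasLineDerivAt v).tendsto_slope_zero_right).congr fun t => by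
    simp [lineSlope, div_eq_inv_mul]

theorem eventually_fderiv_le_of_eventually_lineSlope_le {u : E → ℝ} {x v : E} {a : ℝ}
    (h : ∀ᶠ p in 𝓝 x ×ˢ 𝓝[>] 0, lineSlope u v p ≤ a) :
    ∀ᶠ y in 𝓝 x, DifferentiableAt ℝ u y → fderiv ℝ u y v ≤ a := by
  obtain ⟨P, hP, Q, hQ, hPQ⟩ := eventually_prod_iff.1 h
  filter_upwards [hP] with y hy hdiff
  exact le_of_tendsto (tendsto_lineSlope hdiff v) (hQ.mono fun t ht => hPQ hy ht)

theorem LipschitzWith.eventually_lineSlope_le_of_eventually_fderiv_le [FiniteDimensional ℝ E]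
    {u : E → ℝ} {K : NNReal} (hu : LipschitzWith K u) {x v : E} {a : ℝ}
    (h : ∀ᶠ y in 𝓝 x, DifferentiableAt ℝ u y → fderiv ℝ u y v ≤ a) :
    ∀ᶠ p in 𝓝 x ×ˢ 𝓝[>] 0, lineSlope u v p ≤ a := by
  obtain ⟨δ, hδ, hball⟩ := Metric.eventually_nhds_iff_ball.1 h
  have hnear : ∀ᶠ p : E × ℝ in 𝓝 x ×ˢ 𝓝 0,
      p.1 ∈ Metric.ball x δ ∧ p.1 + p.2 • v ∈ Metric.ball x δ := by
    rw [← nhds_prod_eq]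
    refine (continuous_fst.tendsto (x, 0)).eventually (Metric.ball_mem_nhds x hδ) |>.and ?_
    have hc : Continuous fun p : E × ℝ => p.1 + p.2 • v := by fun_prop
    exact (hc.tendsto' (x, 0) x (by simp)).eventually (Metric.ball_mem_nhds x hδ)
  filter_upwards [hnear.filter_mono (prod_mono le_rfl nhdsWithin_le_nhds),
    tendsto_snd.eventually self_mem_nhdsWithin] with p ⟨hp, hpv⟩ (hpos : 0 < p.2)
  rw [lineSlope, div_le_iff₀ hpos]
  exact hu.sub_le_mul_of_fderiv_le Metric.isOpen_ball (convex_ball x δ) hball hpos.le hp hpv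

end LineSlope

section Clarke

variable {n : ℕ}

local notation "E" => EuclideanSpace ℝ (Fin n)

theorem LipschitzWith.exists_mem_reachableGrad {u : E → ℝ} {κ : NNReal}
    (hu : LipschitzWith κ u) {x : E} {s : Set (E →L[ℝ] ℝ)} (hs : IsClosed s)
    (h : ∃ᶠ z in 𝓝 x, DifferentiableAt ℝ u z ∧ fderiv ℝ u z ∈ s) :
    ∃ p ∈ reachableGrad u x, p ∈ s := by
  obtain ⟨xs, hxs, hmem⟩ := frequently_iff_seq_forall.1 h
  have hball : ∀ j, fderiv ℝ u (xs j) ∈ Metric.closedBall 0 κ := fun j => by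
    simpa using norm_fderiv_le_of_lipschitz ℝ hu
  obtain ⟨p, -, φ, hφ, hlim⟩ := (isCompact_closedBall _ _).tendsto_subseq hball
  exact ⟨p, ⟨xs ∘ φ, fun j => (hmem _).1, hxs.comp hφ.tendsto_atTop, hlim⟩,
    hs.mem_of_tendsto hlim (.of_forall fun j => (hmem _).2)⟩

theorem LipschitzWith.clarkeGrad_nonempty {u : E → ℝ} {κ : NNReal} (hu : LipschitzWith κ u)
    (x : E) : (clarkeGrad u x).Nonempty := by
  have hdense : Dense {z : E | DifferentiableAt ℝ u z} :=
    Measure.dense_of_ae (hu.ae_differentiableAt (μ := volume))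
  obtain ⟨p, hp, -⟩ := hu.exists_mem_reachableGrad isClosed_univ
    ((mem_closure_iff_frequently.1 (hdense x)).mono fun z hz => ⟨hz, mem_univ _⟩)
  exact ⟨p, subset_closure (subset_convexHull ℝ _ hp)⟩

theorem LipschitzWith.abs_apply_le_of_mem_clarkeGrad {u : E → ℝ} {κ : NNReal}
    (hu : LipschitzWith κ u) {x : E} {p : E →L[ℝ] ℝ} (hp : p ∈ clarkeGrad u x) (v : E) :
    |p v| ≤ κ * ‖v‖ := by
  have hreach : reachableGrad u x ⊆ Metric.closedBall 0 κ := by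
    rintro q ⟨xs, -, -, hlim⟩
    refine Metric.isClosed_closedBall.mem_of_tendsto hlim (.of_forall fun j => ?_)
    simpa using norm_fderiv_le_of_lipschitz ℝ hu
  have hpκ : ‖p‖ ≤ κ := by
    simpa using closure_minimal (convexHull_min hreach (convex_closedBall _ _))
      Metric.isClosed_closedBall hp
  exact (p.le_opNorm v).trans (by gcongr)

theorem LipschitzWith.le_clarkeUpper {u : E → ℝ} {κ : NNReal} (hu : LipschitzWith κ u)
    {x : E} {p : E →L[ℝ] ℝ} (hp : p ∈ clarkeGrad u x) (v : E) : p v ≤ clarkeUpper u x v := by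
  refine le_csSup ⟨κ * ‖v‖, ?_⟩ ⟨p, hp, rfl⟩
  rintro _ ⟨q, hq, rfl⟩
  exact (abs_le.1 (hu.abs_apply_le_of_mem_clarkeGrad hq v)).2

theorem LipschitzWith.abs_clarkeUpper_le {u : E → ℝ} {κ : NNReal} (hu : LipschitzWith κ u)
    (x v : E) : |clarkeUpper u x v| ≤ κ * ‖v‖ := by
  obtain ⟨p, hp⟩ := hu.clarkeGrad_nonempty x
  refine abs_le.2 ⟨?_, csSup_le ⟨p v, p, hp, rfl⟩ ?_⟩
  · exact (abs_le.1 (hu.abs_apply_le_of_mem_clarkeGrad hp v)).1.trans (hu.le_clarkeUpper hp v)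
  · rintro _ ⟨q, hq, rfl⟩
    exact (abs_le.1 (hu.abs_apply_le_of_mem_clarkeGrad hq v)).2

theorem LipschitzWith.clarkeUpper_le_of_eventually_fderiv_le {u : E → ℝ} {κ : NNReal}
    (hu : LipschitzWith κ u) {x v : E} {a : ℝ}
    (h : ∀ᶠ y in 𝓝 x, DifferentiableAt ℝ u y → fderiv ℝ u y v ≤ a) :
    clarkeUpper u x v ≤ a := by
  have hreach : reachableGrad u x ⊆ {p | p v ≤ a} := by
    rintro p ⟨xs, hdiff, hxs, hlim⟩
    exact le_of_tendsto (((ContinuousLinearMap.apply ℝ ℝ v).continuous.tendsto p).comp hlim)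
      ((hxs.eventually h).mono fun j hj => hj (hdiff j))
  have hclarke : clarkeGrad u x ⊆ {p | p v ≤ a} :=
    closure_minimal (convexHull_min hreach
      (convex_halfSpace_le (ContinuousLinearMap.apply ℝ ℝ v).isLinear a))
      (isClosed_le (ContinuousLinearMap.apply ℝ ℝ v).continuous continuous_const)
  obtain ⟨p, hp⟩ := hu.clarkeGrad_nonempty x
  refine csSup_le ⟨p v, p, hp, rfl⟩ ?_
  rintro _ ⟨q, hq, rfl⟩
  exact hclarke hq

theorem LipschitzWith.eventually_fderiv_lt_clarkeUpper_add {u : E → ℝ} {κ : NNReal}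
    (hu : LipschitzWith κ u) (x v : E) {ε : ℝ} (hε : 0 < ε) :
    ∀ᶠ y in 𝓝 x, DifferentiableAt ℝ u y → fderiv ℝ u y v < clarkeUpper u x v + ε := by
  have hfreq : ¬∃ᶠ y in 𝓝 x,
      DifferentiableAt ℝ u y ∧ fderiv ℝ u y ∈ {p | clarkeUpper u x v + ε ≤ p v} := by
    intro hfreq
    obtain ⟨p, hp, hpv⟩ := hu.exists_mem_reachableGrad
      (isClosed_le continuous_const (ContinuousLinearMap.apply ℝ ℝ v).continuous) hfreq
    have := hu.le_clarkeUpper (subset_closure (subset_convexHull ℝ _ hp)) v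
    exact (lt_add_of_pos_right _ hε).not_ge (hpv.trans this)
  filter_upwards [not_frequently.1 hfreq] with y hy hdiff
  exact lt_of_not_ge fun hle => hy ⟨hdiff, hle⟩

theorem LipschitzWith.eventually_lineSlope_le_clarkeUpper_add {u : E → ℝ} {κ : NNReal}
    (hu : LipschitzWith κ u) (x v : E) {ε : ℝ} (hε : 0 < ε) :
    ∀ᶠ p in 𝓝 x ×ˢ 𝓝[>] 0, lineSlope u v p ≤ clarkeUpper u x v + ε :=
  hu.eventually_lineSlope_le_of_eventually_fderiv_le <|
    (hu.eventually_fderiv_lt_clarkeUpper_add x v hε).mono fun _ hy hdiff => (hy hdiff).le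

end Clarke

/-- If `u_m` are Lipschitz with constants `κ_m`, `Σ ‖u_m‖_∞ < ∞` and `Σ κ_m < ∞`, then
`u = Σ u_m` is Lipschitz with constant `Σ κ_m` and `∂⁺u(x,v) ≤ Σ ∂⁺u_m(x,v)`. -/
theorem clarkeUpper_tsum_le {n : ℕ}
    (u : ℕ → EuclideanSpace ℝ (Fin n) → ℝ)
    (κ : ℕ → NNReal) (hLip : ∀ m, LipschitzWith (κ m) (u m))
    (c : ℕ → ℝ) (hbd : ∀ m x, |u m x| ≤ c m) (hc : Summable c)
    (hκ : Summable κ) :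
    LipschitzWith (∑' m, κ m) (fun x => ∑' m, u m x) ∧
    ∀ x v, clarkeUpper (fun y => ∑' m, u m y) x v ≤ ∑' m, clarkeUpper (u m) x v := by
  have hsum : ∀ y, Summable fun m => u m y := fun y => .of_norm_bounded hc fun m => hbd m y
  have hUlip := LipschitzWith.tsum hLip hκ hsum
  refine ⟨hUlip, fun x v => le_of_forall_pos_le_add fun ε hε => ?_⟩
  refine hUlip.clarkeUpper_le_of_eventually_fderiv_le
    (eventually_fderiv_le_of_eventually_lineSlope_le ?_)
  filter_upwards [eventually_tsum_le_tsum_add ((NNReal.summable_coe.2 hκ).mul_right ‖v‖)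
    (fun m => abs_lineSlope_le (hLip m) v) (fun m => (hLip m).abs_clarkeUpper_le x v)
    (fun m _ hη => (hLip m).eventually_lineSlope_le_clarkeUpper_add x v hη) hε] with p hp
  rwa [lineSlope_tsum hsum]
end

section
/- Let γ : [0,∞) → M be a globally Lipschitz curve on a compact manifold M, and for t > 0 let μ̃_t be the probability measure on TM defined by ∫ ψ dμ̃_t = (1/t) ∫_0^t ψ(γ(s), γ'(s)) ds. Then any weak-* limit μ̃ of μ̃_{t_i} with t_i → ∞ is a closed probability measure: it has compact support, ∫ ‖v‖ dμ̃ < ∞, and ∫_{TM} d_x f(v) dμ̃(x,v) = 0 for every C¹ function f : M → ℝ. -/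
/-!
Against the occupation measure up to time `t`, the integrand `d_x f(v)` integrates to
`(f (γ t) - f (γ 0)) / t`: the map `f ∘ γ` is Lipschitz, hence absolutely continuous, with
derivative `d_{γ s} f (γ' s)` almost everywhere. Since `f` is bounded this tends to `0`. All
occupation measures are carried by the compact set `K × closedBall 0 κ`, so the weak-* limit is
carried by it too, and on it the continuous integrand agrees with a bounded continuous one
(its clamp), whose integrals converge by assumption.
-/

open Filter Topology MeasureTheory Set

/-- Weak-* convergence stated for arbitrary measures; Mathlib's topology of weak convergence
lives on `FiniteMeasure` and `ProbabilityMeasure`, where the limit would already be assumed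
finite. -/
def IsWeakLimit {ι X : Type*} [TopologicalSpace X] [MeasurableSpace X]
    (μs : ι → Measure X) (l : Filter ι) (μ : Measure X) : Prop :=
  ∀ ψ : X → ℝ, Continuous ψ → (∃ C, ∀ x, |ψ x| ≤ C) →
    Tendsto (fun i => ∫ x, ψ x ∂μs i) l (𝓝 (∫ x, ψ x ∂μ))

namespace IsWeakLimit

variable {ι X : Type*} [MeasurableSpace X] {μs : ι → Measure X} {l : Filter ι} {μ : Measure X}

theorem isProbabilityMeasure [TopologicalSpace X] [l.NeBot] (h : IsWeakLimit μs l μ)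
    (hμs : ∀ i, IsProbabilityMeasure (μs i)) : IsProbabilityMeasure μ := by
  have hμs_one : ∀ i, ∫ _, (1 : ℝ) ∂μs i = 1 := fun i => by
    have := hμs i
    simp
  have hconst := h (fun _ => 1) continuous_const ⟨1, fun _ => by norm_num⟩
  simp only [hμs_one, integral_const, smul_eq_mul, mul_one] at hconst
  have hμ : μ.real univ = 1 := tendsto_nhds_unique hconst tendsto_const_nhds
  exact ⟨(ENNReal.toReal_eq_one_iff _).1 hμ⟩

theorem tendsto_integral_of_isCompact [TopologicalSpace X] (h : IsWeakLimit μs l μ)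
    {K : Set X} (hK : IsCompact K) (hμs : ∀ i, ∀ᵐ x ∂μs i, x ∈ K) (hμ : ∀ᵐ x ∂μ, x ∈ K)
    {φ : X → ℝ} (hφ : Continuous φ) :
    Tendsto (fun i => ∫ x, φ x ∂μs i) l (𝓝 (∫ x, φ x ∂μ)) := by
  obtain ⟨C, hC⟩ := hK.exists_bound_of_continuousOn hφ.continuousOn
  set ψ : X → ℝ := fun x => projIcc (-|C|) |C| (neg_le_self (abs_nonneg C)) (φ x)
  have hψφ : ∀ x ∈ K, ψ x = φ x := fun x hx => by
    simp [ψ, projIcc_of_mem _ (abs_le.1 ((hC x hx).trans (le_abs_self C)))]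
  have hψ := h ψ (continuous_subtype_val.comp (continuous_projIcc.comp hφ))
    ⟨|C|, fun x => abs_le.2 (projIcc _ _ _ (φ x)).2⟩
  have hae : ∀ ν : Measure X, (∀ᵐ x ∂ν, x ∈ K) → ∫ x, ψ x ∂ν = ∫ x, φ x ∂ν :=
    fun ν hν => integral_congr_ae (hν.mono hψφ)
  simpa only [hae _ (hμs _), hae _ hμ] using hψ

theorem ae_mem_of_isClosed [MetricSpace X] [OpensMeasurableSpace X] [l.NeBot] [IsFiniteMeasure μ]
    (h : IsWeakLimit μs l μ) {K : Set X} (hK : IsClosed K) (hKne : K.Nonempty)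
    (hμs : ∀ i, ∀ᵐ x ∂μs i, x ∈ K) : ∀ᵐ x ∂μ, x ∈ K := by
  set ψ : X → ℝ := fun x => min 1 (Metric.infDist x K)
  have hψc : Continuous ψ := continuous_const.min (Metric.continuous_infDist_pt K)
  have hψ_nonneg : 0 ≤ ψ := fun x => le_min zero_le_one Metric.infDist_nonneg
  have hψ_le : ∀ x, |ψ x| ≤ 1 := fun x =>
    abs_le.2 ⟨(neg_nonpos.2 zero_le_one).trans (hψ_nonneg x), min_le_left _ _⟩
  have hψ_zero : ∀ i, ∫ x, ψ x ∂μs i = 0 := fun i =>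
    integral_eq_zero_of_ae <| (hμs i).mono fun x hx => by simp [ψ, Metric.infDist_zero_of_mem hx]
  have hint : ∫ x, ψ x ∂μ = 0 :=
    tendsto_nhds_unique (h ψ hψc ⟨1, hψ_le⟩) (by simp only [hψ_zero]; exact tendsto_const_nhds)
  have hψ_ae : ψ =ᵐ[μ] 0 := (integral_eq_zero_iff_of_nonneg hψ_nonneg
    (Integrable.of_bound hψc.aestronglyMeasurable 1 (ae_of_all _ hψ_le))).1 hint
  filter_upwards [hψ_ae] with x hx
  by_contra hxK
  exact (lt_min one_pos ((hK.notMem_iff_infDist_pos hKne).1 hxK)).ne' hx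

end IsWeakLimit

noncomputable def occupationMeasure {X : Type*} [MeasurableSpace X] (Φ : ℝ → X) (t : ℝ) :
    Measure X :=
  Measure.map Φ ((ENNReal.ofReal t)⁻¹ • (volume : Measure ℝ).restrict (Ioc 0 t))

section OccupationMeasure

variable {X : Type*} [MeasurableSpace X] {Φ : ℝ → X} {t : ℝ}

theorem integral_occupationMeasure (hΦ : Measurable Φ) (ht : 0 ≤ t) {ψ : X → ℝ}
    (hψ : AEStronglyMeasurable ψ (occupationMeasure Φ t)) :
    ∫ x, ψ x ∂occupationMeasure Φ t = t⁻¹ * ∫ s in Ioc 0 t, ψ (Φ s) := by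
  rw [occupationMeasure, integral_map hΦ.aemeasurable hψ, integral_smul_measure,
    ENNReal.toReal_inv, ENNReal.toReal_ofReal ht, smul_eq_mul]

theorem isProbabilityMeasure_occupationMeasure (hΦ : Measurable Φ) (ht : 0 < t) :
    IsProbabilityMeasure (occupationMeasure Φ t) := by
  constructor
  rw [occupationMeasure, Measure.map_apply hΦ MeasurableSet.univ, preimage_univ,
    Measure.smul_apply, Measure.restrict_apply_univ, Real.volume_Ioc, sub_zero, smul_eq_mul,
    ENNReal.inv_mul_cancel (ENNReal.ofReal_pos.2 ht).ne' ENNReal.ofReal_ne_top]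

theorem ae_mem_occupationMeasure (hΦ : Measurable Φ) {K : Set X} (hK : MeasurableSet K)
    (hΦK : ∀ s, Φ s ∈ K) : ∀ᵐ x ∂occupationMeasure Φ t, x ∈ K :=
  (ae_map_iff hΦ.aemeasurable hK).2 (ae_of_all _ hΦK)

end OccupationMeasure

theorem AbsolutelyContinuousOnInterval.integral_eq_sub_of_ae_hasDerivAt {F g : ℝ → ℝ}
    {a b : ℝ} (hF : AbsolutelyContinuousOnInterval F a b)
    (hd : ∀ᵐ s, s ∈ uIcc a b → HasDerivAt F (g s) s) :
    ∫ s in a..b, g s = F b - F a := by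
  rw [← hF.integral_deriv_eq_sub]
  refine intervalIntegral.integral_congr_ae ?_
  filter_upwards [hd] with s hs hsI
  exact (hs (uIoc_subset_uIcc hsI)).deriv.symm

theorem integral_fderiv_occupationMeasure {E : Type*} [NormedAddCommGroup E] [NormedSpace ℝ E]
    [MeasurableSpace E] [BorelSpace E] [SecondCountableTopology E]
    {γ γ' : ℝ → E} {κ : NNReal} (hγ : LipschitzWith κ γ)
    (hderiv : ∀ᵐ s, HasDerivAt γ (γ' s) s) (hγ' : Measurable γ')
    {K : Set E} (hK : IsCompact K) (hrange : ∀ s, γ s ∈ K)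
    {f : E → ℝ} (hf : ContDiff ℝ 1 f) {t : ℝ} (ht : 0 ≤ t) :
    ∫ q, fderiv ℝ f q.1 q.2 ∂occupationMeasure (fun s => (γ s, γ' s)) t =
      t⁻¹ * (f (γ t) - f (γ 0)) := by
  obtain ⟨L, hfK⟩ := hf.locallyLipschitz.locallyLipschitzOn.exists_lipschitzOnWith_of_compact hK
  have hAC : AbsolutelyContinuousOnInterval (f ∘ γ) 0 t :=
    (hfK.comp hγ.lipschitzOnWith fun s _ => hrange s).absolutelyContinuousOnInterval
  have hchain : ∀ᵐ s, HasDerivAt (f ∘ γ) (fderiv ℝ f (γ s) (γ' s)) s :=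
    hderiv.mono fun s hs => (hf.differentiable one_ne_zero (γ s)).hasFDerivAt.comp_hasDerivAt s hs
  rw [integral_occupationMeasure (hγ.continuous.measurable.prodMk hγ') ht
    (hf.continuous_fderiv_apply one_ne_zero).aestronglyMeasurable,
    ← intervalIntegral.integral_of_le ht,
    hAC.integral_eq_sub_of_ae_hasDerivAt (hchain.mono fun s hs _ => hs)]
  rfl

/-- Any weak-* limit of the occupation measures `μ̃_t` of a Lipschitz curve with values in
a compact set is a closed probability measure: it has compact support, finite first moment
in the velocity, and annihilates the differentials of bounded C¹ functions. -/
theorem occupation_measure_limit_is_closed {n : ℕ}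
    (γ γ' : ℝ → EuclideanSpace ℝ (Fin n)) (κ : NNReal)
    (hγ : LipschitzWith κ γ)
    (hderiv : ∀ᵐ s ∂(volume : Measure ℝ), HasDerivAt γ (γ' s) s)
    (hmeas : Measurable γ')
    (hbound : ∀ s, ‖γ' s‖ ≤ κ)
    (K : Set (EuclideanSpace ℝ (Fin n))) (hK : IsCompact K) (hrange : ∀ s, γ s ∈ K)
    (μt : ℝ → Measure (EuclideanSpace ℝ (Fin n) × EuclideanSpace ℝ (Fin n)))
    (hμt : ∀ t : ℝ, 0 < t → μt t =
      Measure.map (fun s => (γ s, γ' s))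
        ((ENNReal.ofReal t)⁻¹ • (volume : Measure ℝ).restrict (Set.Ioc 0 t)))
    (μlim : Measure (EuclideanSpace ℝ (Fin n) × EuclideanSpace ℝ (Fin n)))
    (ts : ℕ → ℝ) (hts : ∀ i, 0 < ts i) (htop : Tendsto ts atTop atTop)
    (hlim : ∀ ψ : EuclideanSpace ℝ (Fin n) × EuclideanSpace ℝ (Fin n) → ℝ,
      Continuous ψ → (∃ Cψ : ℝ, ∀ q, |ψ q| ≤ Cψ) →
      Tendsto (fun i => ∫ q, ψ q ∂(μt (ts i))) atTop (𝓝 (∫ q, ψ q ∂μlim))) :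
    IsProbabilityMeasure μlim ∧
    (∃ K' : Set (EuclideanSpace ℝ (Fin n) × EuclideanSpace ℝ (Fin n)),
      IsCompact K' ∧ μlim K'ᶜ = 0) ∧
    Integrable (fun q : EuclideanSpace ℝ (Fin n) × EuclideanSpace ℝ (Fin n) => ‖q.2‖) μlim ∧
    ∀ f : EuclideanSpace ℝ (Fin n) → ℝ, ContDiff ℝ 1 f → (∃ C : ℝ, ∀ x, |f x| ≤ C) →
      ∫ q : EuclideanSpace ℝ (Fin n) × EuclideanSpace ℝ (Fin n),
        (fderiv ℝ f q.1) q.2 ∂μlim = 0 := by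
  have hlift : Measurable fun s => (γ s, γ' s) := hγ.continuous.measurable.prodMk hmeas
  have hμs : ∀ i, μt (ts i) = occupationMeasure (fun s => (γ s, γ' s)) (ts i) :=
    fun i => hμt _ (hts i)
  have hweak : IsWeakLimit (fun i => μt (ts i)) atTop μlim := hlim
  set K' := K ×ˢ Metric.closedBall (0 : EuclideanSpace ℝ (Fin n)) κ
  have hK' : IsCompact K' := hK.prod (isCompact_closedBall _ _)
  have hliftK' : ∀ s, (γ s, γ' s) ∈ K' := fun s => ⟨hrange s, mem_closedBall_zero_iff.2 (hbound s)⟩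
  have hμsK' : ∀ i, ∀ᵐ q ∂μt (ts i), q ∈ K' := fun i =>
    hμs i ▸ ae_mem_occupationMeasure hlift hK'.measurableSet hliftK'
  have hprob : IsProbabilityMeasure μlim :=
    hweak.isProbabilityMeasure fun i => hμs i ▸ isProbabilityMeasure_occupationMeasure hlift (hts i)
  have hμK' : ∀ᵐ q ∂μlim, q ∈ K' := hweak.ae_mem_of_isClosed hK'.isClosed ⟨_, hliftK' 0⟩ hμsK'
  refine ⟨hprob, ⟨K', hK', hμK'⟩, ?_, fun f hf ⟨C, hC⟩ => ?_⟩
  · rw [← Measure.restrict_eq_self_of_ae_mem hμK']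
    exact continuous_snd.norm.continuousOn.integrableOn_compact hK'
  · have hconv := hweak.tendsto_integral_of_isCompact hK' hμsK' hμK'
      (hf.continuous_fderiv_apply one_ne_zero)
    simp only [hμs, fun i => integral_fderiv_occupationMeasure hγ hderiv hmeas hK hrange hf
      (hts i).le] at hconv
    refine tendsto_nhds_unique hconv (htop.inv_tendsto_atTop.zero_mul_isBoundedUnder_le ?_)
    exact isBoundedUnder_of ⟨C + C, fun i => (norm_sub_le _ _).trans (add_le_add (hC _) (hC _))⟩
end

section
/- Let γ_λ : (−∞,0] → M, λ > 0, be a family of equi-Lipschitz curves on a compact manifold M, and define the probability measure μ̃^λ on TM by ∫ f dμ̃^λ = λ ∫_{−∞}^0 e^{λs} f(γ_λ(s), γ_λ'(s)) ds. If μ̃ is a weak-* limit of μ̃^{λ_n} for some sequence λ_n → 0, then μ̃ is a closed measure: ∫ d_x φ(v) dμ̃(x,v) = 0 for every C¹ function φ : M → ℝ. -/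
/-!
Integrating by parts against the weight `λ e^{λ s}` on `(-∞, 0]` turns
`∫ d_xφ(v) dμ̃^λ = ∫ λ e^{λ s} (φ ∘ γ_λ)'(s) ds` into `λ φ(γ_λ(0)) - λ ∫ λ e^{λ s} φ(γ_λ(s)) ds`,
which is at most `2 λ ‖φ‖_∞` in absolute value and hence vanishes as `λ → 0`.
The integrand `d_xφ(v)` is unbounded, so to pass it through the weak limit one cuts it off
outside the compact set `K × closedBall 0 κ`, which carries every `μ̃^λ` and hence also the limit.
-/

open Filter Topology MeasureTheory Set Real
open scoped NNReal ENNReal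

lemma hasDerivAt_exp_mul (lam s : ℝ) :
    HasDerivAt (fun s => exp (lam * s)) (lam * exp (lam * s)) s := by
  simpa [mul_comm] using ((hasDerivAt_id s).const_mul lam).exp

lemma intervalIntegral_mul_exp_mul (lam a b : ℝ) :
    ∫ s in a..b, lam * exp (lam * s) = exp (lam * b) - exp (lam * a) :=
  intervalIntegral.integral_deriv_eq_sub' _ (funext fun s => (hasDerivAt_exp_mul lam s).deriv)
    (fun s _ => (hasDerivAt_exp_mul lam s).differentiableAt) (by fun_prop)

lemma abs_intervalIntegral_exp_mul_deriv_le {g : ℝ → ℝ} {K : ℝ≥0} {lam C a : ℝ}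
    (hlam : 0 ≤ lam) (hg : LipschitzWith K g) (hC : ∀ s, |g s| ≤ C) (ha : a ≤ 0) :
    |∫ s in a..0, lam * exp (lam * s) * deriv g s| ≤ 2 * lam * C := by
  have hexp : AbsolutelyContinuousOnInterval (fun s => exp (lam * s)) a 0 :=
    (by fun_prop : ContDiff ℝ 1 fun s => exp (lam * s)).contDiffOn.absolutelyContinuousOnInterval
  have hparts := hexp.integral_mul_deriv_eq_deriv_mul
    (hg.lipschitzOnWith (s := uIcc a 0)).absolutelyContinuousOnInterval
  simp only [fun s => (hasDerivAt_exp_mul lam s).deriv, mul_zero, exp_zero, one_mul] at hparts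
  have hrest : |∫ s in a..0, lam * exp (lam * s) * g s| ≤ C * (1 - exp (lam * a)) := by
    calc |∫ s in a..0, lam * exp (lam * s) * g s|
        ≤ ∫ s in a..0, C * (lam * exp (lam * s)) := by
          rw [← Real.norm_eq_abs]
          have hcont : Continuous fun s => C * (lam * exp (lam * s)) := by fun_prop
          refine intervalIntegral.norm_integral_le_of_norm_le ha (ae_of_all _ fun s _ => ?_)
            (hcont.intervalIntegrable (μ := volume) _ _)
          rw [norm_mul, Real.norm_of_nonneg (by positivity), mul_comm]
          exact mul_le_mul_of_nonneg_right (hC s) (by positivity)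
      _ = C * (1 - exp (lam * a)) := by
          rw [intervalIntegral.integral_const_mul, intervalIntegral_mul_exp_mul, mul_zero, exp_zero]
  have hexpa : 0 ≤ exp (lam * a) := (exp_pos _).le
  calc |∫ s in a..0, lam * exp (lam * s) * deriv g s|
      = |lam * ∫ s in a..0, exp (lam * s) * deriv g s| := by
        rw [← intervalIntegral.integral_const_mul]
        simp only [mul_assoc]
    _ = lam * |g 0 - exp (lam * a) * g a - ∫ s in a..0, lam * exp (lam * s) * g s| := by
        rw [hparts, abs_mul, abs_of_nonneg hlam]
    _ ≤ lam * (C + exp (lam * a) * C + C * (1 - exp (lam * a))) := by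
        refine mul_le_mul_of_nonneg_left ?_ hlam
        refine (abs_sub _ _).trans (add_le_add ((abs_sub _ _).trans (add_le_add (hC 0) ?_)) hrest)
        rw [abs_mul, abs_of_nonneg hexpa]
        exact mul_le_mul_of_nonneg_left (hC a) hexpa
    _ = 2 * lam * C := by ring

lemma abs_integral_Iic_exp_mul_deriv_le {g : ℝ → ℝ} {K : ℝ≥0} {lam C : ℝ}
    (hlam : 0 < lam) (hg : LipschitzWith K g) (hC : ∀ s, |g s| ≤ C) :
    |∫ s in Iic 0, lam * exp (lam * s) * deriv g s| ≤ 2 * lam * C := by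
  have hint : IntegrableOn (fun s => lam * exp (lam * s) * deriv g s) (Iic 0) :=
    ((integrableOn_exp_mul_Iic hlam 0).const_mul lam).mul_bdd
      (measurable_deriv g).aestronglyMeasurable (ae_of_all _ fun s => norm_deriv_le_of_lipschitz hg)
  exact le_of_tendsto (intervalIntegral_tendsto_integral_Iic 0 hint tendsto_id).abs
    ((eventually_le_atBot 0).mono fun a ha =>
      abs_intervalIntegral_exp_mul_deriv_le hlam.le hg hC ha)

noncomputable def discountedOccupation {X : Type*} [MeasurableSpace X] (lam : ℝ) (F : ℝ → X) :
    Measure X :=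
  Measure.map F (((volume : Measure ℝ).restrict (Iic (0 : ℝ))).withDensity
    fun s => ENNReal.ofReal (lam * exp (lam * s)))

section DiscountedOccupation

variable {X : Type*} [MeasurableSpace X] {lam : ℝ} {F : ℝ → X}

lemma integral_discountedOccupation (hlam : 0 ≤ lam) (hF : Measurable F) {f : X → ℝ}
    (hf : Measurable f) :
    ∫ x, f x ∂discountedOccupation lam F = ∫ s in Iic 0, lam * exp (lam * s) * f (F s) := by
  rw [discountedOccupation, integral_map hF.aemeasurable hf.aestronglyMeasurable,
    integral_withDensity_eq_integral_toReal_smul (by fun_prop)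
      (ae_of_all _ fun _ => ENNReal.ofReal_lt_top)]
  simp only [ENNReal.toReal_ofReal (by positivity : 0 ≤ lam * exp (lam * _)), smul_eq_mul]

lemma isProbabilityMeasure_discountedOccupation (hlam : 0 < lam) (hF : Measurable F) :
    IsProbabilityMeasure (discountedOccupation lam F) := by
  constructor
  rw [discountedOccupation, Measure.map_apply hF MeasurableSet.univ, preimage_univ,
    withDensity_apply _ MeasurableSet.univ, Measure.restrict_univ,
    ← ofReal_integral_eq_lintegral_ofReal ((integrableOn_exp_mul_Iic hlam 0).const_mul lam)
      (ae_of_all _ fun s => by positivity),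
    integral_const_mul, integral_exp_mul_Iic hlam, mul_zero, exp_zero,
    mul_one_div_cancel hlam.ne', ENNReal.ofReal_one]

lemma discountedOccupation_compl_eq_zero (hF : Measurable F) {S : Set X} (hS : MeasurableSet S)
    (hFS : ∀ s, F s ∈ S) : discountedOccupation lam F Sᶜ = 0 := by
  rw [discountedOccupation, Measure.map_apply hF hS.compl, preimage_compl,
    preimage_eq_univ_iff.2 (range_subset_iff.2 hFS), compl_univ, measure_empty]

end DiscountedOccupation

def TendstoWeakly {ι X : Type*} [TopologicalSpace X] [MeasurableSpace X] (l : Filter ι)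
    (μs : ι → Measure X) (μ : Measure X) : Prop :=
  ∀ ψ : X → ℝ, Continuous ψ → (∃ C : ℝ, ∀ x, |ψ x| ≤ C) →
    Tendsto (fun i => ∫ x, ψ x ∂μs i) l (𝓝 (∫ x, ψ x ∂μ))

namespace TendstoWeakly

variable {ι X : Type*} [MeasurableSpace X] {l : Filter ι} {μs : ι → Measure X} {μ : Measure X}

lemma isProbabilityMeasure [TopologicalSpace X] [l.NeBot] (h : TendstoWeakly l μs μ)
    (hμs : ∀ i, IsProbabilityMeasure (μs i)) : IsProbabilityMeasure μ := by
  have hmass : ∫ _, (1 : ℝ) ∂μ = 1 :=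
    tendsto_nhds_unique (h _ continuous_const ⟨1, fun _ => by simp⟩) (by simp)
  rw [integral_const, smul_eq_mul, mul_one, measureReal_def, ENNReal.toReal_eq_one_iff] at hmass
  exact ⟨hmass⟩

lemma measure_compl_eq_zero [PseudoMetricSpace X] [OpensMeasurableSpace X] [l.NeBot]
    [IsFiniteMeasure μ] (h : TendstoWeakly l μs μ) {S : Set X} (hS : IsClosed S)
    (hne : S.Nonempty) (hμs : ∀ i, μs i Sᶜ = 0) : μ Sᶜ = 0 := by
  set f : X → ℝ := fun x => min 1 (Metric.infDist x S)
  have hf : Continuous f := continuous_const.min (Metric.continuous_infDist_pt S)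
  have hf0 : 0 ≤ f := fun x => le_min zero_le_one Metric.infDist_nonneg
  have hfS : ∀ x ∈ S, f x = 0 := fun x hx => by simp [f, Metric.infDist_zero_of_mem hx]
  have hint : ∫ x, f x ∂μ = 0 := by
    refine tendsto_nhds_unique (h f hf ⟨1, fun x => ?_⟩) (tendsto_const_nhds.congr fun i => ?_)
    · rw [abs_of_nonneg (hf0 x)]
      exact min_le_left _ _
    · have hae : ∀ᵐ x ∂μs i, x ∈ S := mem_ae_iff.2 (hμs i)
      exact (integral_eq_zero_of_ae (hae.mono hfS)).symm
  have hfint : Integrable f μ :=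
    (integrable_const 1).mono' hf.aestronglyMeasurable (ae_of_all _ fun x => by
      rw [Real.norm_of_nonneg (hf0 x)]
      exact min_le_left _ _)
  have hf_ae : f =ᵐ[μ] 0 := (integral_eq_zero_iff_of_nonneg hf0 hfint).1 hint
  refine measure_mono_null (fun x hx => ?_) (ae_iff.1 hf_ae)
  exact (lt_min zero_lt_one ((hS.notMem_iff_infDist_pos hne).1 hx)).ne'

lemma tendsto_integral_of_isCompact [TopologicalSpace X] [RegularSpace X] [LocallyCompactSpace X]
    (h : TendstoWeakly l μs μ) {S : Set X} (hS : IsCompact S) (hμs : ∀ i, μs i Sᶜ = 0)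
    (hμ : μ Sᶜ = 0) {ψ : X → ℝ} (hψ : Continuous ψ) :
    Tendsto (fun i => ∫ x, ψ x ∂μs i) l (𝓝 (∫ x, ψ x ∂μ)) := by
  obtain ⟨χ, hχS, -, hχc, -⟩ := exists_continuous_one_zero_of_isCompact hS isClosed_empty
    (disjoint_empty S)
  have hcut : ∀ ν : Measure X, ν Sᶜ = 0 → ∫ x, (χ * ψ) x ∂ν = ∫ x, ψ x ∂ν := fun ν hν => by
    have hae : ∀ᵐ x ∂ν, x ∈ S := mem_ae_iff.2 hν
    exact integral_congr_ae (hae.mono fun x hx => by simp [hχS hx])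
  obtain ⟨C, hC⟩ := (χ.continuous.mul hψ).bounded_above_of_compact_support hχc.mul_right
  simpa only [hcut _ hμ, hcut _ (hμs _)] using
    h _ (χ.continuous.mul hψ) ⟨C, fun x => (Real.norm_eq_abs _).symm.trans_le (hC x)⟩

end TendstoWeakly

section Differential

variable {E : Type*} [NormedAddCommGroup E] [NormedSpace ℝ E]

lemma ContDiff.exists_lipschitzWith_comp [ProperSpace E] {F : Type*} [NormedAddCommGroup F]
    [NormedSpace ℝ F] {α : Type*} [PseudoEMetricSpace α] {φ : E → F} (hφ : ContDiff ℝ 1 φ)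
    {K : Set E} (hK : IsCompact K) {γ : α → E} {κ : ℝ≥0} (hγ : LipschitzWith κ γ)
    (hγK : ∀ a, γ a ∈ K) : ∃ L, LipschitzWith L (φ ∘ γ) := by
  obtain ⟨R, hR⟩ := hK.isBounded.subset_closedBall 0
  obtain ⟨L, hL⟩ := hφ.contDiffOn.exists_lipschitzOnWith one_ne_zero (convex_closedBall 0 R)
    (isCompact_closedBall 0 R)
  exact ⟨L * κ, lipschitzOnWith_univ.1 (hL.comp hγ.lipschitzOnWith fun a _ => hR (hγK a))⟩

lemma abs_integral_fderiv_discountedOccupation_le [MeasurableSpace E] [BorelSpace E]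
    [SecondCountableTopology E] {φ : E → ℝ} (hφ : ContDiff ℝ 1 φ) {γ γ' : ℝ → E}
    (hγ : Measurable γ) (hγ' : Measurable γ')
    (hderiv : ∀ᵐ s ∂(volume : Measure ℝ), s ≤ 0 → HasDerivAt γ (γ' s) s)
    {L : ℝ≥0} (hL : LipschitzWith L (φ ∘ γ)) {C : ℝ} (hC : ∀ s, |φ (γ s)| ≤ C)
    {lam : ℝ} (hlam : 0 < lam) :
    |∫ q, fderiv ℝ φ q.1 q.2 ∂discountedOccupation lam fun s => (γ s, γ' s)| ≤ 2 * lam * C := by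
  have hchain : ∀ᵐ s ∂(volume.restrict (Iic 0)),
      lam * exp (lam * s) * fderiv ℝ φ (γ s) (γ' s) = lam * exp (lam * s) * deriv (φ ∘ γ) s := by
    filter_upwards [ae_restrict_of_ae hderiv, ae_restrict_mem measurableSet_Iic] with s hs hs0
    rw [((hφ.differentiable one_ne_zero _).hasFDerivAt.comp_hasDerivAt s (hs hs0)).deriv]
  rw [integral_discountedOccupation hlam.le (hγ.prodMk hγ')
    (hφ.continuous_fderiv_apply one_ne_zero).measurable, integral_congr_ae hchain]
  exact abs_integral_Iic_exp_mul_deriv_le hlam hL hC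

end Differential

/-- Any weak-* limit, along a sequence `λ_n → 0`, of the discounted occupation measures
`μ̃^λ` of an equi-Lipschitz family of curves `γ_λ : (-∞,0] → M` (with values in a compact
set) is a closed measure: it annihilates the differentials of bounded C¹ functions. -/
theorem discounted_occupation_measure_limit_is_closed {n : ℕ}
    (Γ Γ' : ℝ → ℝ → EuclideanSpace ℝ (Fin n)) (κ : NNReal)
    (hΓ : ∀ lam : ℝ, 0 < lam → LipschitzWith κ (Γ lam))
    (hderiv : ∀ lam : ℝ, 0 < lam →
      ∀ᵐ s ∂(volume : Measure ℝ), s ≤ 0 → HasDerivAt (Γ lam) (Γ' lam s) s)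
    (hmeas : ∀ lam : ℝ, 0 < lam → Measurable (Γ' lam))
    (hbound : ∀ lam : ℝ, 0 < lam → ∀ s, ‖Γ' lam s‖ ≤ κ)
    (K : Set (EuclideanSpace ℝ (Fin n))) (hK : IsCompact K)
    (hrange : ∀ lam : ℝ, 0 < lam → ∀ s, Γ lam s ∈ K)
    (μdisc : ℝ → Measure (EuclideanSpace ℝ (Fin n) × EuclideanSpace ℝ (Fin n)))
    (hμ : ∀ lam : ℝ, 0 < lam → μdisc lam =
      Measure.map (fun s => (Γ lam s, Γ' lam s))
        (((volume : Measure ℝ).restrict (Set.Iic (0 : ℝ))).withDensity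
          (fun s => ENNReal.ofReal (lam * Real.exp (lam * s)))))
    (μlim : Measure (EuclideanSpace ℝ (Fin n) × EuclideanSpace ℝ (Fin n)))
    (lams : ℕ → ℝ) (hpos : ∀ i, 0 < lams i) (hto0 : Tendsto lams atTop (𝓝 0))
    (hlim : ∀ ψ : EuclideanSpace ℝ (Fin n) × EuclideanSpace ℝ (Fin n) → ℝ,
      Continuous ψ → (∃ Cψ : ℝ, ∀ q, |ψ q| ≤ Cψ) →
      Tendsto (fun i => ∫ q, ψ q ∂(μdisc (lams i))) atTop (𝓝 (∫ q, ψ q ∂μlim))) :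
    ∀ φ : EuclideanSpace ℝ (Fin n) → ℝ, ContDiff ℝ 1 φ → (∃ C : ℝ, ∀ x, |φ x| ≤ C) →
      ∫ q : EuclideanSpace ℝ (Fin n) × EuclideanSpace ℝ (Fin n),
        (fderiv ℝ φ q.1) q.2 ∂μlim = 0 := by
  rintro φ hφ ⟨C, hC⟩
  set S := K ×ˢ Metric.closedBall (0 : EuclideanSpace ℝ (Fin n)) κ
  have hS : IsCompact S := hK.prod (isCompact_closedBall _ _)
  have hcurve : ∀ i s, (Γ (lams i) s, Γ' (lams i) s) ∈ S := fun i s =>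
    ⟨hrange _ (hpos i) s, mem_closedBall_zero_iff.2 (hbound _ (hpos i) s)⟩
  have hmeasCurve : ∀ i, Measurable fun s => (Γ (lams i) s, Γ' (lams i) s) := fun i =>
    (hΓ _ (hpos i)).continuous.measurable.prodMk (hmeas _ (hpos i))
  have hdisc : ∀ i, μdisc (lams i) = discountedOccupation (lams i) fun s =>
      (Γ (lams i) s, Γ' (lams i) s) := fun i => hμ _ (hpos i)
  have hweak : TendstoWeakly atTop (fun i => μdisc (lams i)) μlim := hlim
  have hsupp : ∀ i, μdisc (lams i) Sᶜ = 0 := fun i => by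
    rw [hdisc]
    exact discountedOccupation_compl_eq_zero (hmeasCurve i) hS.isClosed.measurableSet (hcurve i)
  have := hweak.isProbabilityMeasure fun i => by
    rw [hdisc]
    exact isProbabilityMeasure_discountedOccupation (hpos i) (hmeasCurve i)
  have hsuppLim := hweak.measure_compl_eq_zero hS.isClosed ⟨_, hcurve 0 0⟩ hsupp
  refine tendsto_nhds_unique (hweak.tendsto_integral_of_isCompact hS hsupp hsuppLim
    (hφ.continuous_fderiv_apply one_ne_zero)) ?_
  refine squeeze_zero_norm (fun i => ?_) (by simpa using (hto0.const_mul 2).mul_const C)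
  obtain ⟨L, hL⟩ := hφ.exists_lipschitzWith_comp hK (hΓ _ (hpos i)) (hrange _ (hpos i))
  rw [hdisc, Real.norm_eq_abs]
  exact abs_integral_fderiv_discountedOccupation_le hφ (hΓ _ (hpos i)).continuous.measurable
    (hmeas _ (hpos i)) (hderiv _ (hpos i)) hL (fun s => hC _) (hpos i)
end
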